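/- arXiv:2206.00664 — 2 statements merged into one kernel-verified Lean document; each statement's English description precedes it below -/
import Mathlib

section
/- For every ξ ∈ ℝ^d the energy E is differentiable at ξ with gradient ∇E(ξ) = ξ − X softmax(β X^T ξ) = ξ − f(ξ); consequently ∇E(ξ) = 0 if and only if ξ is a fixed point of the Hopfield update rule, i.e. f(ξ) = ξ. -/
open scoped BigOperators RealInnerProductSpace

/-- softmax(v)_j = exp(v_j) / Σ_k exp(v_k). -/
noncomputable def softmax {N : ℕ} (v : Fin N → ℝ) : Fin N → ℝ :=
  fun j => Real.exp (v j) / ∑ k, Real.exp (v k)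

/-- The Hopfield update rule f(ξ) = X softmax(β Xᵀ ξ) = Σ_i softmax(β ⟪x_i, ξ⟫)_i • x_i. -/
noncomputable def hopfieldUpdate {d N : ℕ} (x : Fin N → EuclideanSpace ℝ (Fin d))
    (β : ℝ) (ξ : EuclideanSpace ℝ (Fin d)) : EuclideanSpace ℝ (Fin d) :=
  ∑ i, softmax (fun j => β * ⟪x j, ξ⟫) i • x i

/-- The energy E(ξ) = −β⁻¹ log(Σ_i exp(β x_iᵀ ξ)) + β⁻¹ log N + ½ ξᵀξ + ½ M². -/
noncomputable def energy {d N : ℕ} (x : Fin N → EuclideanSpace ℝ (Fin d))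
    (β M : ℝ) (ξ : EuclideanSpace ℝ (Fin d)) : ℝ :=
  -β⁻¹ * Real.log (∑ i, Real.exp (β * ⟪x i, ξ⟫)) + β⁻¹ * Real.log N
    + (1 / 2) * ⟪ξ, ξ⟫ + (1 / 2) * M ^ 2
/-!
The energy is `-β⁻¹` times the log-sum-exp of the scores `β ⟪x i, ξ⟫`, plus `½ ‖ξ‖²` and
constants. The gradient of `ζ ↦ log ∑ i, exp ⟪a i, ζ⟫` is the softmax-weighted average of the
`a i`; with `a i = β • x i` this is `β • f ξ`, so the gradient of the energy is `ξ - f ξ`.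
-/

open Real

section GradientCalculus

variable {F : Type*} [NormedAddCommGroup F] [InnerProductSpace ℝ F] [CompleteSpace F]
  {f g : F → ℝ} {f' g' x : F}

theorem HasGradientAt.add (hf : HasGradientAt f f' x) (hg : HasGradientAt g g' x) :
    HasGradientAt (fun y => f y + g y) (f' + g') x := by
  rw [hasGradientAt_iff_hasFDerivAt] at *
  rw [map_add]
  exact hf.add hg

theorem HasGradientAt.add_const (hf : HasGradientAt f f' x) (c : ℝ) :
    HasGradientAt (fun y => f y + c) f' x := by
  simpa using hf.add (hasGradientAt_const x c)

theorem HasGradientAt.const_mul (hf : HasGradientAt f f' x) (c : ℝ) :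
    HasGradientAt (fun y => c * f y) (c • f') x := by
  rw [hasGradientAt_iff_hasFDerivAt] at *
  rw [map_smul]
  exact hf.const_mul c

theorem hasGradientAt_inner_self (x : F) : HasGradientAt (fun y => ⟪y, y⟫) ((2 : ℝ) • x) x := by
  rw [hasGradientAt_iff_hasFDerivAt]
  refine ((hasFDerivAt_id x).inner ℝ (hasFDerivAt_id x)).congr_fderiv ?_
  ext y
  simp [two_mul, real_inner_comm]

theorem hasGradientAt_log_sum_exp_inner {N : ℕ} [NeZero N] (a : Fin N → F) (ξ : F) :
    HasGradientAt (fun ζ => log (∑ i, exp ⟪a i, ζ⟫))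
      (∑ i, softmax (fun j => ⟪a j, ξ⟫) i • a i) ξ := by
  have hS : (∑ i, exp ⟪a i, ξ⟫) ≠ 0 :=
    (Finset.sum_pos (fun i _ => exp_pos _) Finset.univ_nonempty).ne'
  rw [hasGradientAt_iff_hasFDerivAt]
  refine ((HasFDerivAt.fun_sum fun i _ =>
    ((innerSL ℝ (a i)).hasFDerivAt (x := ξ)).exp).log hS).congr_fderiv ?_
  ext v
  simp [softmax, Finset.mul_sum, div_eq_inv_mul, mul_assoc]

end GradientCalculus

theorem hasGradientAt_energy {d N : ℕ} [NeZero N] (x : Fin N → EuclideanSpace ℝ (Fin d))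
    {β : ℝ} (hβ : β ≠ 0) (M : ℝ) (ξ : EuclideanSpace ℝ (Fin d)) :
    HasGradientAt (energy x β M) (ξ - hopfieldUpdate x β ξ) ξ := by
  have hLSE : HasGradientAt (fun ζ => log (∑ i, exp (β * ⟪x i, ζ⟫)))
      (β • hopfieldUpdate x β ξ) ξ := by
    simpa only [real_inner_smul_left, hopfieldUpdate, Finset.smul_sum, smul_comm β]
      using hasGradientAt_log_sum_exp_inner (fun i => β • x i) ξ
  have hE := (((hLSE.const_mul (-β⁻¹)).add_const (β⁻¹ * log N)).add
    ((hasGradientAt_inner_self ξ).const_mul (1 / 2))).add_const ((1 / 2) * M ^ 2)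
  rw [smul_smul, neg_mul, inv_mul_cancel₀ hβ] at hE
  unfold energy
  convert hE using 1
  module

/-- For every ξ the energy E is differentiable at ξ with gradient
∇E(ξ) = ξ − f(ξ); consequently ∇E(ξ) = 0 iff ξ is a fixed point of the update rule. -/
theorem energy_hasGradientAt_and_critical_iff_fixedPoint
    {d N : ℕ} (x : Fin N → EuclideanSpace ℝ (Fin d)) (β M : ℝ) (hβ : 0 < β)
    (hM : IsGreatest (Set.range fun i => ‖x i‖) M)
    (ξ : EuclideanSpace ℝ (Fin d)) :
    HasGradientAt (energy x β M) (ξ - hopfieldUpdate x β ξ) ξ ∧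
      (gradient (energy x β M) ξ = 0 ↔ hopfieldUpdate x β ξ = ξ) := by
  obtain ⟨i, -⟩ := hM.1
  have : NeZero N := ⟨i.pos.ne'⟩
  have hgrad := hasGradientAt_energy x hβ.ne' M ξ
  exact ⟨hgrad, by rw [hgrad.gradient, sub_eq_zero, eq_comm]⟩
end

section
/- One step of the Hopfield update rule does not increase the energy; more precisely, for every ξ ∈ ℝ^d one has E(f(ξ)) ≤ E(ξ) − ½ ‖f(ξ) − ξ‖². In particular E(f(ξ)) < E(ξ) unless ξ is a fixed point of f. -/
open scoped BigOperators RealInnerProductSpace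

/-! The energy is the sum of the concave function `-β⁻¹ lse(β Xᵀ ξ)` and the convex function
`½ ‖ξ‖²`, and `β f(ξ)` is the gradient of `lse(β Xᵀ ξ)`. Linearising the concave part at `ξ`
majorises `E` by a quadratic whose minimiser is exactly `f(ξ)` (the concave–convex procedure);
the gap `½ ‖f(ξ) - ξ‖²` is the strong convexity of `½ ‖ξ‖²`. The linearisation bound is Jensen's
inequality for `exp` with the softmax weights. -/

open Real

section Softmax

variable {N : ℕ}

lemma softmax_nonneg (v : Fin N → ℝ) (i : Fin N) : 0 ≤ softmax v i := by
  unfold softmax; positivity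

lemma sum_softmax [NeZero N] (v : Fin N → ℝ) : ∑ i, softmax v i = 1 := by
  simp only [softmax, ← Finset.sum_div]
  exact div_self (Finset.sum_pos (fun i _ => exp_pos _) Finset.univ_nonempty).ne'

lemma sum_softmax_mul_exp_sub [NeZero N] (v w : Fin N → ℝ) :
    ∑ i, softmax v i * exp (w i - v i) = (∑ i, exp (w i)) / ∑ i, exp (v i) := by
  simp only [softmax, exp_sub, Finset.sum_div]
  refine Finset.sum_congr rfl fun i _ => ?_
  field_simp

lemma log_sum_exp_add_sum_softmax_mul_le (v w : Fin N → ℝ) :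
    log (∑ i, exp (v i)) + ∑ i, softmax v i * (w i - v i) ≤ log (∑ i, exp (w i)) := by
  rcases N.eq_zero_or_pos with rfl | hN
  · simp
  have : NeZero N := ⟨hN.ne'⟩
  have hv : 0 < ∑ i, exp (v i) := Finset.sum_pos (fun i _ => exp_pos _) Finset.univ_nonempty
  have jensen : exp (∑ i, softmax v i * (w i - v i)) ≤ ∑ i, softmax v i * exp (w i - v i) := by
    simpa using convexOn_exp.map_sum_le (t := Finset.univ) (fun i _ => softmax_nonneg v i)
      (sum_softmax v) (fun i _ => Set.mem_univ (w i - v i))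
  rw [sum_softmax_mul_exp_sub, le_div_iff₀ hv] at jensen
  have := log_le_log (by positivity) jensen
  rwa [log_mul (exp_pos _).ne' hv.ne', log_exp, add_comm] at this

end Softmax

section Hopfield

variable {d N : ℕ} (x : Fin N → EuclideanSpace ℝ (Fin d))

lemma inner_hopfieldUpdate (β : ℝ) (ξ v : EuclideanSpace ℝ (Fin d)) :
    ⟪hopfieldUpdate x β ξ, v⟫ = ∑ i, softmax (fun j => β * ⟪x j, ξ⟫) i * ⟪x i, v⟫ := by
  simp only [hopfieldUpdate, sum_inner, real_inner_smul_left]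

lemma log_sum_exp_add_inner_hopfieldUpdate_le (β : ℝ) (ξ η : EuclideanSpace ℝ (Fin d)) :
    log (∑ i, exp (β * ⟪x i, ξ⟫)) + β * ⟪hopfieldUpdate x β ξ, η - ξ⟫
      ≤ log (∑ i, exp (β * ⟪x i, η⟫)) := by
  convert log_sum_exp_add_sum_softmax_mul_le (fun j => β * ⟪x j, ξ⟫) (fun j => β * ⟪x j, η⟫)
    using 2
  rw [inner_hopfieldUpdate, Finset.mul_sum]
  exact Finset.sum_congr rfl fun i _ => by rw [inner_sub_right]; ring

lemma energy_le_add_inner_sub_norm_sq {β : ℝ} (hβ : 0 < β) (M : ℝ)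
    (ξ η : EuclideanSpace ℝ (Fin d)) :
    energy x β M η
      ≤ energy x β M ξ + ⟪η - hopfieldUpdate x β ξ, η - ξ⟫ - (1 / 2) * ‖η - ξ‖ ^ 2 := by
  have tangent := log_sum_exp_add_inner_hopfieldUpdate_le x β ξ η
  have scaled : -β⁻¹ * log (∑ i, exp (β * ⟪x i, η⟫))
      ≤ -β⁻¹ * log (∑ i, exp (β * ⟪x i, ξ⟫)) - ⟪hopfieldUpdate x β ξ, η - ξ⟫ := by
    have := mul_le_mul_of_nonneg_left tangent (inv_pos.mpr hβ).le
    rw [mul_add, ← mul_assoc, inv_mul_cancel₀ hβ.ne', one_mul] at this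
    linarith
  simp only [energy, inner_sub_left, inner_sub_right, ← real_inner_self_eq_norm_sq,
    real_inner_comm ξ η] at scaled ⊢
  linarith

end Hopfield

theorem energy_update_decrease_general
    {d N : ℕ} (x : Fin N → EuclideanSpace ℝ (Fin d)) (β M : ℝ) (hβ : 0 < β)
    (ξ : EuclideanSpace ℝ (Fin d)) :
    energy x β M (hopfieldUpdate x β ξ)
        ≤ energy x β M ξ - (1 / 2) * ‖hopfieldUpdate x β ξ - ξ‖ ^ 2 ∧
      (hopfieldUpdate x β ξ ≠ ξ →
        energy x β M (hopfieldUpdate x β ξ) < energy x β M ξ) := by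
  have decrease := energy_le_add_inner_sub_norm_sq x hβ M ξ (hopfieldUpdate x β ξ)
  rw [sub_self, inner_zero_left, add_zero] at decrease
  refine ⟨decrease, fun hne => ?_⟩
  have : 0 < ‖hopfieldUpdate x β ξ - ξ‖ := norm_pos_iff.mpr (sub_ne_zero.mpr hne)
  nlinarith

/-- One step of the Hopfield update rule does not increase the energy:
E(f(ξ)) ≤ E(ξ) − ½ ‖f(ξ) − ξ‖²; in particular E(f(ξ)) < E(ξ) unless ξ is a fixed point. -/
theorem energy_update_decrease
    {d N : ℕ} (x : Fin N → EuclideanSpace ℝ (Fin d)) (β M : ℝ) (hβ : 0 < β)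
    (hM : IsGreatest (Set.range fun i => ‖x i‖) M)
    (ξ : EuclideanSpace ℝ (Fin d)) :
    energy x β M (hopfieldUpdate x β ξ)
        ≤ energy x β M ξ - (1 / 2) * ‖hopfieldUpdate x β ξ - ξ‖ ^ 2 ∧
      (hopfieldUpdate x β ξ ≠ ξ →
        energy x β M (hopfieldUpdate x β ξ) < energy x β M ξ) :=
  energy_update_decrease_general x β M hβ ξ
end
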